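/- arXiv:1809.02856 — 4 statements merged into one kernel-verified Lean document; each statement's English description precedes it below -/
import Mathlib

section
/- Let z be a real number with 0 < z < 1 and let s be a positive natural number. Then the polylogarithm of negative integer order −s at z satisfies Li_{−s}(z) = ∑_{k=1}^∞ k^s z^k = (1/ln z)^s · g^{(s)}(1), where g^{(s)}(1) denotes the s-th derivative at x = 1 of the function g(x) = −z^x/(z^x − 1) = z^x/(1 − z^x). -/
/-!
With `c = log z < 0` we have `z ^ x = exp (c x)`, so near `x = 1` the function `g` is the geometric
series `∑_{k ≥ 1} exp (c x) ^ k`. Each differentiation in `x` multiplies the `k`-th term by `c k`,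
and termwise differentiation is justified, in the variable `t = c x`, by dominating the
differentiated series on a half-line `t < t₀ / 2 < 0`.
After `s` steps, `g⁽ˢ⁾(1) = c ^ s ∑_{k ≥ 1} k ^ s z ^ k`.
-/

open Filter Topology

/-- `Li_{-s}(z)`, with the summation index shifted to start at `0`. -/
noncomputable def polylogNeg (s : ℕ) (z : ℝ) : ℝ :=
  ∑' k : ℕ, ((k : ℝ) + 1) ^ s * z ^ (k + 1)

lemma summable_polylogNeg (s : ℕ) {z : ℝ} (hz : ‖z‖ < 1) :
    Summable fun k : ℕ => ((k : ℝ) + 1) ^ s * z ^ (k + 1) := by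
  have := (summable_pow_mul_geometric_of_norm_lt_one s hz).comp_injective (add_left_injective 1)
  exact this.congr fun k => by simp

lemma polylogNeg_zero {z : ℝ} (hz : ‖z‖ < 1) : polylogNeg 0 z = z / (1 - z) := by
  simp only [polylogNeg, pow_zero, one_mul, pow_succ, tsum_mul_right,
    tsum_geometric_of_norm_lt_one hz]
  ring

lemma norm_exp_lt_one {t : ℝ} (ht : t < 0) : ‖Real.exp t‖ < 1 := by
  rwa [Real.norm_of_nonneg (Real.exp_pos t).le, Real.exp_lt_one_iff]

/-- `z d/dz Li_{-s}(z) = Li_{-s-1}(z)`, in the variable `t = log z`. -/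
lemma hasDerivAt_polylogNeg_exp (s : ℕ) {t : ℝ} (ht : t < 0) :
    HasDerivAt (fun t => polylogNeg s (Real.exp t)) (polylogNeg (s + 1) (Real.exp t)) t := by
  have hterm (k : ℕ) (y : ℝ) : HasDerivAt (fun y => ((k : ℝ) + 1) ^ s * Real.exp y ^ (k + 1))
      (((k : ℝ) + 1) ^ (s + 1) * Real.exp y ^ (k + 1)) y := by
    refine (((Real.hasDerivAt_exp y).fun_pow (k + 1)).const_mul _).congr_deriv ?_
    rw [Nat.add_sub_cancel]
    push_cast
    ring
  have hmem : t ∈ Set.Iio (t / 2) := by simp only [Set.mem_Iio]; linarith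
  refine hasDerivAt_tsum_of_isPreconnected
    (summable_polylogNeg (s + 1) (norm_exp_lt_one (by linarith : t / 2 < 0)))
    isOpen_Iio isPreconnected_Iio (fun k y _ => hterm k y) (fun k y hy => ?_) hmem
    (summable_polylogNeg s (norm_exp_lt_one ht)) hmem
  rw [Real.norm_eq_abs, abs_of_pos (by positivity)]
  gcongr
  exact hy.le

lemma iteratedDeriv_polylogNeg_exp_mul (s : ℕ) {c x : ℝ} (hcx : c * x < 0) :
    iteratedDeriv s (fun x => polylogNeg 0 (Real.exp (c * x))) x
      = c ^ s * polylogNeg s (Real.exp (c * x)) := by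
  induction s generalizing x with
  | zero => simp
  | succ s ih =>
    have hopen : IsOpen {y : ℝ | c * y < 0} := isOpen_lt (by fun_prop) continuous_const
    have heq : iteratedDeriv s (fun x => polylogNeg 0 (Real.exp (c * x)))
        =ᶠ[𝓝 x] fun y => c ^ s * polylogNeg s (Real.exp (c * y)) :=
      eventually_of_mem (hopen.mem_nhds hcx) fun y hy => ih hy
    have hderiv := ((hasDerivAt_polylogNeg_exp s hcx).comp x
      ((hasDerivAt_id x).const_mul c)).const_mul (c ^ s)
    simp only [Function.comp_def, mul_one] at hderiv
    rw [iteratedDeriv_succ, heq.deriv_eq, hderiv.deriv]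
    ring

theorem polylog_neg_order_eq_deriv_general (z : ℝ) (hz0 : 0 < z) (hz1 : z < 1)
    (s : ℕ) :
    ∑' k : ℕ, ((k : ℝ) + 1) ^ s * z ^ (k + 1) =
      (1 / Real.log z) ^ s *
        iteratedDeriv s (fun x : ℝ => z ^ x / (1 - z ^ x)) 1 := by
  change polylogNeg s z = _
  have hlog : Real.log z < 0 := Real.log_neg hz0 hz1
  have hg : (fun x : ℝ => z ^ x / (1 - z ^ x)) =ᶠ[𝓝 1]
      fun x => polylogNeg 0 (Real.exp (Real.log z * x)) := by
    filter_upwards [lt_mem_nhds one_pos] with x hx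
    rw [polylogNeg_zero (norm_exp_lt_one (mul_neg_of_neg_of_pos hlog hx)), Real.rpow_def_of_pos hz0]
  rw [hg.iteratedDeriv_eq, iteratedDeriv_polylogNeg_exp_mul s (by simpa using hlog), mul_one,
    Real.exp_log hz0, one_div, inv_pow, inv_mul_cancel_left₀ (pow_ne_zero s hlog.ne)]

/-- For `0 < z < 1` and positive natural `s`, the polylogarithm of negative order `-s`,
`Li_{-s}(z) = ∑_{k=1}^∞ k^s z^k`, equals `(1/ln z)^s` times the `s`-th derivative at `x = 1`
of `g(x) = z^x / (1 - z^x)`. -/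
theorem polylog_neg_order_eq_deriv (z : ℝ) (hz0 : 0 < z) (hz1 : z < 1)
    (s : ℕ) (hs : 0 < s) :
    ∑' k : ℕ, ((k : ℝ) + 1) ^ s * z ^ (k + 1) =
      (1 / Real.log z) ^ s *
        iteratedDeriv s (fun x : ℝ => z ^ x / (1 - z ^ x)) 1 :=
  polylog_neg_order_eq_deriv_general z hz0 hz1 s
end

section
/- Let z be a real number with z > 0 and z ≠ 1, let b be a positive natural number, and let s be a natural number. Then the finite sum ∑_{k=1}^b k^s z^k equals (1/ln z)^s times the s-th derivative, evaluated at x = 1, of the function F(x) = z^x (z^{bx} − 1)/(z^x − 1). -/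
/-!
With `w = z ^ x = exp (x log z)`, which is `≠ 1` for `x ≠ 0`, the function `F` is the geometric
sum `w + ⋯ + w ^ b = ∑ₖ exp (k log z · x)` near `x = 1`. Differentiating `s` times multiplies the
`k`-th term by `(k log z) ^ s`, and at `x = 1` the term becomes `(k log z) ^ s z ^ k`.
-/

open Finset Real Filter Topology

lemma mul_geom_div_eq_sum_Icc {K : Type*} [Field K] {w : K} (hw : w ≠ 1) (b : ℕ) :
    w * (w ^ b - 1) / (w - 1) = ∑ k ∈ Icc 1 b, w ^ k := by
  rw [← Ico_add_one_right_eq_Icc, geom_sum_Ico hw (by omega)]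
  ring

lemma rpow_mul_geom_div_eq_sum_exp {z x : ℝ} (hz0 : 0 < z) (hz1 : z ≠ 1) (hx : x ≠ 0)
    (b : ℕ) :
    z ^ x * (z ^ ((b : ℝ) * x) - 1) / (z ^ x - 1) = ∑ k ∈ Icc 1 b, exp (k * log z * x) := by
  have hw : exp (log z * x) ≠ 1 := by
    rw [Ne, exp_eq_one_iff]
    exact mul_ne_zero (log_ne_zero_of_pos_of_ne_one hz0 hz1) hx
  have hpow (k : ℕ) : exp (k * log z * x) = exp (log z * x) ^ k := by
    rw [← exp_nat_mul, mul_assoc]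
  rw [rpow_def_of_pos hz0, rpow_def_of_pos hz0, mul_left_comm, ← mul_assoc, hpow,
    mul_geom_div_eq_sum_Icc hw]
  simp only [hpow]

lemma iteratedDeriv_sum_exp_const_mul {ι : Type*} (t : Finset ι) (c : ι → ℝ) (n : ℕ) (x : ℝ) :
    iteratedDeriv n (fun y => ∑ k ∈ t, exp (c k * y)) x = ∑ k ∈ t, c k ^ n * exp (c k * x) := by
  rw [iteratedDeriv_fun_sum fun k _ => by fun_prop]
  simp only [iteratedDeriv_exp_const_mul]

theorem finite_sum_eq_deriv_general (z : ℝ) (hz0 : 0 < z) (hz1 : z ≠ 1)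
    (b : ℕ) (s : ℕ) :
    ∑ k ∈ Finset.Icc 1 b, (k : ℝ) ^ s * z ^ k =
      (1 / Real.log z) ^ s *
        iteratedDeriv s (fun x : ℝ => z ^ x * (z ^ ((b : ℝ) * x) - 1) / (z ^ x - 1)) 1 := by
  have hF : (fun x : ℝ => z ^ x * (z ^ ((b : ℝ) * x) - 1) / (z ^ x - 1)) =ᶠ[𝓝 1]
      fun x => ∑ k ∈ Icc 1 b, exp (k * log z * x) :=
    (eventually_ne_nhds one_ne_zero).mono fun x hx =>
      rpow_mul_geom_div_eq_sum_exp hz0 hz1 hx b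
  have hL : log z ≠ 0 := log_ne_zero_of_pos_of_ne_one hz0 hz1
  rw [hF.iteratedDeriv_eq, iteratedDeriv_sum_exp_const_mul, mul_sum]
  refine sum_congr rfl fun k _ => ?_
  rw [mul_one, exp_nat_mul, exp_log hz0, ← mul_assoc, ← mul_pow, mul_left_comm,
    one_div_mul_cancel hL, mul_one]

/-- For `z > 0`, `z ≠ 1`, a positive natural `b` and a natural `s`, the finite sum
`∑_{k=1}^b k^s z^k` equals `(1/ln z)^s` times the `s`-th derivative at `x = 1` of
`F(x) = z^x (z^(b x) - 1) / (z^x - 1)`. -/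
theorem finite_sum_eq_deriv (z : ℝ) (hz0 : 0 < z) (hz1 : z ≠ 1)
    (b : ℕ) (hb : 0 < b) (s : ℕ) :
    ∑ k ∈ Finset.Icc 1 b, (k : ℝ) ^ s * z ^ k =
      (1 / Real.log z) ^ s *
        iteratedDeriv s (fun x : ℝ => z ^ x * (z ^ ((b : ℝ) * x) - 1) / (z ^ x - 1)) 1 :=
  finite_sum_eq_deriv_general z hz0 hz1 b s
end

section
/- Let z be a real number with 0 < z < 1 and let s be a natural number. Then the s-th iterated derivative at x = 1 of the function H(x) = ∑_{k=1}^∞ z^{kx} (which converges for all x > 0) equals (ln z)^s · ∑_{k=1}^∞ k^s z^k. -/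
/-!
Termwise, `d/dx z ^ ((k + 1) x) = (k + 1) log z · z ^ ((k + 1) x)`. For `y > x / 2 > 0` the
`n`-th derivatives are dominated by `((k + 1) |log z|) ^ n (z ^ (x / 2)) ^ (k + 1)`, which is
summable since `z ^ (x / 2) < 1`, so near every `x > 0` the series may be differentiated term by
term any number of times.
-/

open Real Set Filter

lemma summable_succ_mul_pow_mul_geometric {w : ℝ} (hw : ‖w‖ < 1) (r : ℝ) (n : ℕ) :
    Summable fun k : ℕ => (((k : ℝ) + 1) * r) ^ n * w ^ (k + 1) := by
  have h : Summable fun k : ℕ => ((k + 1 : ℕ) : ℝ) ^ n * w ^ (k + 1) :=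
    (summable_nat_add_iff (f := fun k : ℕ => (k : ℝ) ^ n * w ^ k) 1).2
      (summable_pow_mul_geometric_of_norm_lt_one n hw)
  refine (h.mul_left (r ^ n)).congr fun k => ?_
  rw [mul_pow, Nat.cast_succ]
  ring

section

variable {z : ℝ}

lemma hasDerivAt_mul_log_pow_mul_rpow (hz : 0 < z) (c : ℝ) (n : ℕ) (y : ℝ) :
    HasDerivAt (fun y => (c * log z) ^ n * z ^ (c * y))
      ((c * log z) ^ (n + 1) * z ^ (c * y)) y := by
  refine ((((hasDerivAt_id y).const_mul c).const_rpow hz).const_mul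
    ((c * log z) ^ n)).congr_deriv ?_
  simp only [id, mul_one]
  ring

lemma rpow_succ_mul_le_pow (hz0 : 0 < z) (hz1 : z ≤ 1) (k : ℕ) {a y : ℝ} (hay : a ≤ y) :
    z ^ (((k : ℝ) + 1) * y) ≤ (z ^ a) ^ (k + 1) := by
  rw [← rpow_mul_natCast hz0.le]
  apply rpow_le_rpow_of_exponent_ge hz0 hz1
  push_cast
  nlinarith [(k.cast_nonneg : (0 : ℝ) ≤ k)]

lemma norm_succ_mul_log_pow_mul_rpow_le (hz0 : 0 < z) (hz1 : z ≤ 1) (k n : ℕ) {a y : ℝ}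
    (hay : a ≤ y) :
    ‖(((k : ℝ) + 1) * log z) ^ n * z ^ (((k : ℝ) + 1) * y)‖
      ≤ (((k : ℝ) + 1) * |log z|) ^ n * (z ^ a) ^ (k + 1) := by
  rw [norm_mul, norm_pow, norm_mul, norm_of_nonneg (by positivity : (0 : ℝ) ≤ (k : ℝ) + 1),
    norm_eq_abs, norm_of_nonneg (rpow_nonneg hz0.le _)]
  gcongr
  exact rpow_succ_mul_le_pow hz0 hz1 k hay

lemma hasDerivAt_tsum_succ_mul_log_pow_mul_rpow (hz0 : 0 < z) (hz1 : z < 1) (n : ℕ) {x : ℝ}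
    (hx : 0 < x) :
    HasDerivAt (fun y => ∑' k : ℕ, (((k : ℝ) + 1) * log z) ^ n * z ^ (((k : ℝ) + 1) * y))
      (∑' k : ℕ, (((k : ℝ) + 1) * log z) ^ (n + 1) * z ^ (((k : ℝ) + 1) * x)) x := by
  have hw : ‖z ^ (x / 2)‖ < 1 := by
    rw [norm_of_nonneg (rpow_nonneg hz0.le _)]
    exact rpow_lt_one hz0.le hz1 (by positivity)
  have hx_mem : x ∈ Ioi (x / 2) := by simp [hx]
  have hsum_at_x :
      Summable fun k : ℕ => (((k : ℝ) + 1) * log z) ^ n * z ^ (((k : ℝ) + 1) * x) :=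
    (summable_succ_mul_pow_mul_geometric hw |log z| n).of_norm_bounded fun k =>
      norm_succ_mul_log_pow_mul_rpow_le hz0 hz1.le k n hx_mem.le
  exact hasDerivAt_tsum_of_isPreconnected (summable_succ_mul_pow_mul_geometric hw |log z| (n + 1))
    isOpen_Ioi isPreconnected_Ioi (fun k y _ => hasDerivAt_mul_log_pow_mul_rpow hz0 _ n y)
    (fun k y hy => norm_succ_mul_log_pow_mul_rpow_le hz0 hz1.le k (n + 1) hy.le)
    hx_mem hsum_at_x hx_mem

theorem iteratedDeriv_tsum_rpow_succ_mul (hz0 : 0 < z) (hz1 : z < 1) (n : ℕ) {x : ℝ}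
    (hx : 0 < x) :
    iteratedDeriv n (fun x : ℝ => ∑' k : ℕ, z ^ (((k : ℝ) + 1) * x)) x
      = ∑' k : ℕ, (((k : ℝ) + 1) * log z) ^ n * z ^ (((k : ℝ) + 1) * x) := by
  induction n generalizing x with
  | zero => simp
  | succ n ih =>
    have h_near_x :
        iteratedDeriv n (fun x : ℝ => ∑' k : ℕ, z ^ (((k : ℝ) + 1) * x)) =ᶠ[nhds x]
        fun y => ∑' k : ℕ, (((k : ℝ) + 1) * log z) ^ n * z ^ (((k : ℝ) + 1) * y) :=
      eventually_of_mem (Ioi_mem_nhds hx) fun y hy => ih hy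
    rw [iteratedDeriv_succ, h_near_x.deriv_eq]
    exact (hasDerivAt_tsum_succ_mul_log_pow_mul_rpow hz0 hz1 n hx).deriv

end

/-- For `0 < z < 1` and natural `s`, the `s`-th iterated derivative at `x = 1` of
`H(x) = ∑_{k=1}^∞ z^(k x)` equals `(ln z)^s · ∑_{k=1}^∞ k^s z^k`. -/
theorem iteratedDeriv_tsum_geom (z : ℝ) (hz0 : 0 < z) (hz1 : z < 1) (s : ℕ) :
    iteratedDeriv s (fun x : ℝ => ∑' k : ℕ, z ^ (((k : ℝ) + 1) * x)) 1 =
      Real.log z ^ s * ∑' k : ℕ, ((k : ℝ) + 1) ^ s * z ^ (k + 1) := by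
  rw [iteratedDeriv_tsum_rpow_succ_mul hz0 hz1 s one_pos, ← tsum_mul_left]
  congr 1 with k
  rw [mul_one, mul_pow, ← Nat.cast_succ, rpow_natCast, Nat.succ_eq_add_one]
  ring
end

section
/- Let f : ℝ → ℝ be n-times continuously differentiable on ℝ, let x be a real number, and let n be a natural number. Then the central finite difference quotient converges to the n-th derivative: lim_{h→0} (1/h^n) · ∑_{i=0}^n (−1)^i · C(n,i) · f(x + (n/2 − i)·h) = f^{(n)}(x). -/
/-!
Expand `f (x + t)` as its Taylor polynomial of degree `n` plus a Peano remainder `o(tⁿ)`.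
Up to the reflection `i ↦ n - i`, the weights `(-1)ⁱ C(n,i)` at the nodes `n/2 - i` form the
`n`-th forward difference with unit step, which annihilates `tᵏ` for `k < n` and sends `tⁿ`
to `n!`. So the polynomial part contributes exactly `f⁽ⁿ⁾(x) hⁿ`, while each of the finitely
many remainder terms is still `o(hⁿ)`.
-/

open Filter Topology Finset Asymptotics Nat

section CommRing

variable {R : Type*} [CommRing R]

theorem sum_alternating_choose_mul_sub_pow (y : R) {n k : ℕ} (hk : k ≤ n) :
    ∑ i ∈ range (n + 1), (-1 : R) ^ i * n.choose i * (y - i) ^ k =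
      if k = n then (n ! : R) else 0 := by
  have hreflect : ∑ i ∈ range (n + 1), (-1 : R) ^ i * n.choose i * (y - i) ^ k =
      (fwdDiff 1)^[n] (fun r : R => r ^ k) (y - n) := by
    rw [fwdDiff_iter_eq_sum_shift, ← sum_range_reflect]
    refine sum_congr rfl fun i hi => ?_
    have hin : i ≤ n := Nat.lt_succ_iff.mp (mem_range.mp hi)
    rw [add_tsub_cancel_right, Nat.choose_symm hin, zsmul_eq_mul, nsmul_eq_mul, Nat.cast_sub hin]
    push_cast
    ring
  rw [hreflect]
  split_ifs with hkn
  · subst hkn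
    rw [fwdDiff_iter_eq_factorial]
    rfl
  · rw [fwdDiff_iter_pow_eq_zero_of_lt (lt_of_le_of_ne hk hkn)]
    rfl

theorem sum_alternating_choose_mul_polynomial (c : ℕ → R) (y h : R) (n : ℕ) :
    ∑ i ∈ range (n + 1),
        (-1 : R) ^ i * n.choose i * ∑ k ∈ range (n + 1), c k * ((y - i) * h) ^ k =
      n ! * c n * h ^ n := by
  simp_rw [mul_sum]
  rw [sum_comm]
  have hterm : ∀ k ∈ range (n + 1), ∑ i ∈ range (n + 1),
      (-1 : R) ^ i * n.choose i * (c k * ((y - i) * h) ^ k) =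
        c k * h ^ k * ∑ i ∈ range (n + 1), (-1 : R) ^ i * n.choose i * (y - i) ^ k := by
    intro k _
    rw [mul_sum]
    exact sum_congr rfl fun i _ => by rw [mul_pow]; ring
  rw [sum_congr rfl hterm, sum_eq_single_of_mem n (self_mem_range_succ n)]
  · rw [sum_alternating_choose_mul_sub_pow y le_rfl, if_pos rfl]
    ring
  · intro k hk hkn
    rw [sum_alternating_choose_mul_sub_pow y (Nat.lt_succ_iff.mp (mem_range.mp hk)), if_neg hkn,
      mul_zero]

end CommRing

section NormedField

variable {𝕜 : Type*} [NormedField 𝕜]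

theorem Asymptotics.IsLittleO.comp_const_mul_pow {E : Type*} [Norm E] {g : 𝕜 → E} {n : ℕ}
    (hg : g =o[𝓝 0] fun t => t ^ n) (a : 𝕜) :
    (fun h => g (a * h)) =o[𝓝 0] fun h => h ^ n := by
  have hlim : Tendsto (fun h : 𝕜 => a * h) (𝓝 0) (𝓝 0) := by
    simpa using (continuous_const_mul a).tendsto 0
  refine (hg.comp_tendsto hlim).trans_isBigO ?_
  simp only [Function.comp_def, mul_pow]
  exact isBigO_const_mul_self _ _ _

theorem tendsto_one_div_pow_mul_of_sub_isLittleO {S : 𝕜 → 𝕜} {c : 𝕜} {n : ℕ}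
    (hS : (fun h => S h - c * h ^ n) =o[𝓝 0] fun h => h ^ n) :
    Tendsto (fun h => 1 / h ^ n * S h) (𝓝[≠] 0) (𝓝 c) := by
  have hlim : Tendsto (fun h => (S h - c * h ^ n) / h ^ n) (𝓝[≠] 0) (𝓝 0) :=
    (isLittleO_iff_tendsto' ?_).mp (hS.mono nhdsWithin_le_nhds)
  · rw [← add_zero c]
    refine (hlim.const_add c).congr' ?_
    filter_upwards [self_mem_nhdsWithin] with h hh
    have : h ^ n ≠ 0 := pow_ne_zero n hh
    field_simp
    ring
  · filter_upwards [self_mem_nhdsWithin] with h hh h0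
    exact absurd (pow_eq_zero_iff'.mp h0).1 hh

end NormedField

theorem taylorWithinEval_univ_add (f : ℝ → ℝ) (n : ℕ) (x t : ℝ) :
    taylorWithinEval f n Set.univ x (x + t) =
      ∑ k ∈ range (n + 1), iteratedDeriv k f x / k ! * t ^ k := by
  rw [taylor_within_apply]
  refine sum_congr rfl fun k _ => ?_
  rw [iteratedDerivWithin_univ, add_sub_cancel_left, smul_eq_mul]
  ring

theorem taylor_remainder_isLittleO {f : ℝ → ℝ} {n : ℕ} (hf : ContDiff ℝ n f) (x : ℝ) :
    (fun t => f (x + t) - taylorWithinEval f n Set.univ x (x + t)) =o[𝓝 0] fun t => t ^ n := by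
  have hlim : Tendsto (fun t : ℝ => x + t) (𝓝 0) (𝓝 x) := by
    simpa using (continuous_const_add x).tendsto 0
  simpa [Function.comp_def] using (taylor_isLittleO_univ hf).comp_tendsto hlim

/-- Central finite difference: if `f : ℝ → ℝ` is `n`-times continuously differentiable, then
`(1/h^n) ∑_{i=0}^n (-1)^i C(n,i) f(x + (n/2 - i) h)` tends to `f^(n)(x)` as `h → 0`, `h ≠ 0`. -/
theorem central_difference_tendsto_iteratedDeriv (f : ℝ → ℝ) (n : ℕ) (x : ℝ)
    (hf : ContDiff ℝ n f) :
    Tendsto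
      (fun h : ℝ => (1 / h ^ n) *
        ∑ i ∈ Finset.range (n + 1),
          (-1 : ℝ) ^ i * (n.choose i : ℝ) * f (x + ((n : ℝ) / 2 - (i : ℝ)) * h))
      (nhdsWithin 0 {0}ᶜ) (nhds (iteratedDeriv n f x)) := by
  set R : ℝ → ℝ := fun t => f (x + t) - taylorWithinEval f n Set.univ x (x + t)
  have hsplit : ∀ h : ℝ, ∑ i ∈ range (n + 1),
      (-1 : ℝ) ^ i * (n.choose i : ℝ) * f (x + ((n : ℝ) / 2 - (i : ℝ)) * h) -
        iteratedDeriv n f x * h ^ n =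
      ∑ i ∈ range (n + 1),
        (-1 : ℝ) ^ i * (n.choose i : ℝ) * R (((n : ℝ) / 2 - (i : ℝ)) * h) := by
    intro h
    have hpoly := sum_alternating_choose_mul_polynomial (fun k => iteratedDeriv k f x / k !)
      ((n : ℝ) / 2) h n
    rw [mul_div_cancel₀ _ (by positivity : (n ! : ℝ) ≠ 0)] at hpoly
    simp only [R, taylorWithinEval_univ_add, mul_sub, sum_sub_distrib, hpoly]
  apply tendsto_one_div_pow_mul_of_sub_isLittleO
  simp_rw [hsplit]
  exact IsLittleO.fun_sum fun i _ =>
    ((taylor_remainder_isLittleO hf x).comp_const_mul_pow _).const_mul_left _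
end
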